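/- arXiv:2006.10825 — 4 statements merged into one kernel-verified Lean document; each statement's English description precedes it below -/
import Mathlib

section
/- Let (X,G) be a dynamical system over a σ-compact locally compact abelian group G with a transitive point p ∈ X. Then the following are equivalent: (i) (X,G) is a weakly almost periodic dynamical system; (ii) every x ∈ X is a weakly almost periodic point; (iii) p is a weakly almost periodic point. -/
open MeasureTheory Filter Topology Set Pointwise

noncomputable section

namespace APPaper

/-- A subset `A` of `G` is relatively dense if there is a compact `K ⊆ G` with
`G = ⋃_{a ∈ A} (a + K)`. -/
def RelDense {G : Type*} [AddCommGroup G] [TopologicalSpace G] (A : Set G) : Prop :=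
  ∃ K : Set G, IsCompact K ∧ ∀ g : G, ∃ a ∈ A, g - a ∈ K

/-- A continuous character of `G`, i.e. a continuous homomorphism into the unit circle
(realized inside `ℂ`). -/
def IsChar {G : Type*} [AddCommGroup G] [TopologicalSpace G] (ξ : G → ℂ) : Prop :=
  Continuous ξ ∧ (∀ t, ‖ξ t‖ = 1) ∧ ∀ s t, ξ (s + t) = ξ s * ξ t

/-- `B` is a Følner sequence (of open, relatively compact, nonempty sets) for the
measure `μ` on `G`. -/
structure IsFolner {G : Type*} [AddCommGroup G] [TopologicalSpace G] [MeasurableSpace G]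
    (μ : Measure G) (B : ℕ → Set G) : Prop where
  isOpen : ∀ n, IsOpen (B n)
  nonempty : ∀ n, (B n).Nonempty
  relCompact : ∀ n, IsCompact (closure (B n))
  folner : ∀ t : G,
    Tendsto (fun n => (μ ((B n \ (t +ᵥ B n)) ∪ ((t +ᵥ B n) \ B n))).toReal / (μ (B n)).toReal)
      atTop (𝓝 0)

/-- The average `(1/|B n|) ∫_{B n} h` of a real valued function. -/
def avg {G : Type*} [MeasurableSpace G] (μ : Measure G) (B : ℕ → Set G) (n : ℕ)
    (h : G → ℝ) : ℝ :=
  (μ (B n)).toReal⁻¹ * ∫ t in B n, h t ∂μ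

/-- The average `(1/|B n|) ∫_{B n} h` of a complex valued function. -/
def avgC {G : Type*} [MeasurableSpace G] (μ : Measure G) (B : ℕ → Set G) (n : ℕ)
    (h : G → ℂ) : ℂ :=
  (μ (B n)).toReal⁻¹ • ∫ t in B n, h t ∂μ

/-- The upper mean `M̄(h) = limsup_n (1/|B n|) ∫_{B n} h` along the Følner sequence. -/
def upperMean {G : Type*} [MeasurableSpace G] (μ : Measure G) (B : ℕ → Set G) (h : G → ℝ) : ℝ :=
  Filter.limsup (fun n => avg μ B n h) Filter.atTop

/-- The upper density `Dens(A) = M̄(1_A)` of a subset of `G`. -/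
def upperDens {G : Type*} [MeasurableSpace G] (μ : Measure G) (B : ℕ → Set G) (A : Set G) : ℝ :=
  upperMean μ B (A.indicator fun _ => (1 : ℝ))

/-- `M̄_n(h) = sup_{r ∈ G} (1/|B n|) ∫_{B n + r} h`. -/
def supAvg {G : Type*} [AddCommGroup G] [MeasurableSpace G] (μ : Measure G) (B : ℕ → Set G)
    (n : ℕ) (h : G → ℝ) : ℝ :=
  ⨆ r : G, (μ (B n)).toReal⁻¹ * ∫ t in (r +ᵥ B n), h t ∂μ

/-- A function `f : G → E` is mean almost periodic (w.r.t. `(B n)`) if for each `ε > 0` the set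
of `t` with `M̄(‖f - f(· - t)‖) < ε` is relatively dense. -/
def MeanAPFun {G : Type*} [AddCommGroup G] [TopologicalSpace G] [MeasurableSpace G]
    (μ : Measure G) (B : ℕ → Set G) {E : Type*} [NormedAddCommGroup E] (f : G → E) : Prop :=
  ∀ ε : ℝ, 0 < ε → RelDense {t : G | upperMean μ B (fun s => ‖f s - f (s - t)‖) < ε}

/-- A function `f : G → ℂ` is Besicovitch almost periodic (w.r.t. `(B n)`) if it can be
approximated, in the seminorm `M̄(|·|)`, by finite linear combinations of continuous
characters. -/
def BesicovitchAPFun {G : Type*} [AddCommGroup G] [TopologicalSpace G] [MeasurableSpace G]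
    (μ : Measure G) (B : ℕ → Set G) (f : G → ℂ) : Prop :=
  ∀ ε : ℝ, 0 < ε → ∃ (k : ℕ) (ξ : Fin k → G → ℂ) (c : Fin k → ℂ),
    (∀ j, IsChar (ξ j)) ∧ upperMean μ B (fun s => ‖f s - ∑ j, c j * ξ j s‖) < ε

/-- A function `f : G → E` is Bohr almost periodic if for every `ε > 0` the set of `t` with
`‖f - f(· - t)‖_∞ < ε` is relatively dense. -/
def BohrAPFun {G : Type*} [AddCommGroup G] [TopologicalSpace G] {E : Type*}
    [NormedAddCommGroup E] (f : G → E) : Prop :=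
  ∀ ε : ℝ, 0 < ε → RelDense {t : G | (⨆ s : G, ‖f s - f (s - t)‖) < ε}

/-- The orbit `{t +ᵥ x : t ∈ G}` of a point. -/
def orbitSet (G : Type*) {X : Type*} [AddCommGroup G] [AddAction G X] (x : X) : Set X :=
  Set.range fun t : G => t +ᵥ x

/-- The averaged pseudometric `D(x,y) = M̄(s ↦ dist(s x, s y))`. -/
def avgDist {G : Type*} [AddCommGroup G] [MeasurableSpace G] {X : Type*} [PseudoMetricSpace X]
    [AddAction G X] (μ : Measure G) (B : ℕ → Set G) (x y : X) : ℝ :=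
  upperMean μ B fun s => dist (s +ᵥ x) (s +ᵥ y)

/-- A point `x` is mean almost periodic (w.r.t. the metric of `X` and `(B n)`) if for every
`ε > 0` the set `{t : D(x, t x) < ε}` is relatively dense. -/
def MeanAPPoint {G : Type*} [AddCommGroup G] [TopologicalSpace G] [MeasurableSpace G]
    {X : Type*} [PseudoMetricSpace X] [AddAction G X] (μ : Measure G) (B : ℕ → Set G)
    (x : X) : Prop :=
  ∀ ε : ℝ, 0 < ε → RelDense {t : G | avgDist μ B x (t +ᵥ x) < ε}

/-- Mean almost periodicity of a point with respect to an abstract metric `d` on `X`. -/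
def MeanAPPointWith {G : Type*} [AddCommGroup G] [TopologicalSpace G] [MeasurableSpace G]
    {X : Type*} [AddAction G X] (μ : Measure G) (B : ℕ → Set G) (d : X → X → ℝ)
    (x : X) : Prop :=
  ∀ ε : ℝ, 0 < ε → RelDense {t : G | upperMean μ B (fun s => d (s +ᵥ x) (s +ᵥ (t +ᵥ x))) < ε}

/-- A point `x` is Besicovitch almost periodic if `t ↦ f (t +ᵥ x)` is a Besicovitch almost
periodic function for every continuous `f : X → ℂ`. -/
def BesicovitchAPPoint {G : Type*} [AddCommGroup G] [TopologicalSpace G] [MeasurableSpace G]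
    {X : Type*} [TopologicalSpace X] [AddAction G X] (μ : Measure G) (B : ℕ → Set G)
    (x : X) : Prop :=
  ∀ f : C(X, ℂ), BesicovitchAPFun μ B fun t : G => f (t +ᵥ x)

/-- The averaged pseudometric `D_n(x,y) = M̄_n(s ↦ dist(s x, s y))` at level `n`. -/
def weylDist {G : Type*} [AddCommGroup G] [MeasurableSpace G] {X : Type*} [PseudoMetricSpace X]
    [AddAction G X] (μ : Measure G) (B : ℕ → Set G) (n : ℕ) (x y : X) : ℝ :=
  supAvg μ B n fun s => dist (s +ᵥ x) (s +ᵥ y)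

/-- A point `x` is Weyl almost periodic if for every `ε > 0` there is an `N` such that
`{t : D_N(x, t x) < ε}` is relatively dense. -/
def WeylAPPoint {G : Type*} [AddCommGroup G] [TopologicalSpace G] [MeasurableSpace G]
    {X : Type*} [PseudoMetricSpace X] [AddAction G X] (μ : Measure G) (B : ℕ → Set G)
    (x : X) : Prop :=
  ∀ ε : ℝ, 0 < ε → ∃ N : ℕ, RelDense {t : G | weylDist μ B N x (t +ᵥ x) < ε}

/-- A point `y` is generic for the measure `m` along `(B n)`. -/
def IsGeneric {G : Type*} [AddCommGroup G] [MeasurableSpace G] {X : Type*}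
    [TopologicalSpace X] [MeasurableSpace X] [AddAction G X] (μ : Measure G) (B : ℕ → Set G)
    (m : Measure X) (y : X) : Prop :=
  ∀ f : C(X, ℂ),
    Tendsto (fun n => avgC μ B n fun t => f (t +ᵥ y)) atTop (𝓝 (∫ z, f z ∂m))

/-- The measure `m` is invariant under the action of `G`. -/
def InvariantMeasure (G : Type*) [AddCommGroup G] {X : Type*} [MeasurableSpace X]
    [AddAction G X] (m : Measure X) : Prop :=
  ∀ t : G, MeasurePreserving (fun x : X => t +ᵥ x) m m

/-- The measure `m` is ergodic for the action of `G`. -/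
def ErgodicMeasure (G : Type*) [AddCommGroup G] {X : Type*} [MeasurableSpace X]
    [AddAction G X] (m : Measure X) : Prop :=
  ∀ A : Set X, MeasurableSet A → (∀ t : G, (fun x : X => t +ᵥ x) ⁻¹' A = A) →
    m A = 0 ∨ m A = 1

/-- `f` is an eigenfunction of `(X,G,m)` with eigenvalue the continuous character `ξ`. -/
def IsEigenfunctionWith {G : Type*} [AddCommGroup G] [TopologicalSpace G] {X : Type*}
    [MeasurableSpace X] [AddAction G X] (m : Measure X) (ξ : G → ℂ) (f : X → ℂ) : Prop :=
  IsChar ξ ∧ MemLp f 2 m ∧ ¬ f =ᵐ[m] (fun _ => (0 : ℂ)) ∧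
    ∀ t : G, (fun x => f (t +ᵥ x)) =ᵐ[m] fun x => ξ t * f x

/-- The set of eigenvalues of `(X,G,m)`. -/
def Eig (G : Type*) [AddCommGroup G] [TopologicalSpace G] {X : Type*} [MeasurableSpace X]
    [AddAction G X] (m : Measure X) : Set (G → ℂ) :=
  {ξ | ∃ f : X → ℂ, IsEigenfunctionWith m ξ f}

/-- `(X,G,m)` has pure point spectrum: `L²(X,m)` possesses an orthonormal (Hilbert) basis
consisting of eigenfunctions. -/
def PurePointSpectrum (G : Type*) [AddCommGroup G] [TopologicalSpace G] {X : Type*}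
    [MeasurableSpace X] [AddAction G X] (m : Measure X) : Prop :=
  ∃ (ι : Type) (b : HilbertBasis ι ℂ (Lp ℂ 2 m)), ∀ i : ι,
    ∃ (ξ : G → ℂ) (f : X → ℂ) (hf : MemLp f 2 m),
      IsEigenfunctionWith m ξ f ∧ b i = hf.toLp f

/-- Every eigenvalue of `(X,G,m)` admits a continuous eigenfunction. -/
def ContinuousEigenfunctions (G : Type*) [AddCommGroup G] [TopologicalSpace G] {X : Type*}
    [TopologicalSpace X] [MeasurableSpace X] [AddAction G X] (m : Measure X) : Prop :=
  ∀ ξ ∈ Eig G m, ∃ f : X → ℂ, Continuous f ∧ IsEigenfunctionWith m ξ f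

/-- The set of frequencies of a point `x`: those continuous characters `ξ` for which the
average `A((t ↦ f(t +ᵥ x)) ⋅ conj ξ)` exists and is nonzero for some `f ∈ C(X)`. -/
def Freq {G : Type*} [AddCommGroup G] [TopologicalSpace G] [MeasurableSpace G] {X : Type*}
    [TopologicalSpace X] [AddAction G X] (μ : Measure G) (B : ℕ → Set G) (x : X) :
    Set (G → ℂ) :=
  {ξ | IsChar ξ ∧ ∃ (f : C(X, ℂ)) (c : ℂ), c ≠ 0 ∧
    Tendsto (fun n => avgC μ B n fun t => f (t +ᵥ x) * (starRingEnd ℂ) (ξ t)) atTop (𝓝 c)}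

/-- Birkhoff's ergodic theorem holds along `(B n)` for `(X,G,m)`. -/
def BirkhoffAlong {G : Type*} [AddCommGroup G] [MeasurableSpace G] {X : Type*}
    [MeasurableSpace X] [AddAction G X] (μ : Measure G) (B : ℕ → Set G) (m : Measure X) :
    Prop :=
  ∀ f : X → ℂ, Integrable f m →
    ∀ᵐ x ∂m, Tendsto (fun n => avgC μ B n fun t => f (t +ᵥ x)) atTop (𝓝 (∫ z, f z ∂m))

/-- `e` is (a representative of) the orthogonal projection in `L²(X,m)` of `f` onto the
eigenspace of `ξ`: it belongs to the eigenspace and `f - e` is orthogonal to it. -/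
def IsProjOnEigenspace {G : Type*} [AddCommGroup G] {X : Type*} [MeasurableSpace X]
    [AddAction G X] (m : Measure X) (ξ : G → ℂ) (f e : X → ℂ) : Prop :=
  MemLp e 2 m ∧ (∀ t : G, (fun x => e (t +ᵥ x)) =ᵐ[m] fun x => ξ t * e x) ∧
    ∀ g : X → ℂ, MemLp g 2 m → (∀ t : G, (fun x => g (t +ᵥ x)) =ᵐ[m] fun x => ξ t * g x) →
      ∫ x, (f x - e x) * (starRingEnd ℂ) (g x) ∂m = 0

/-- `d` is a metric on the topological space `X` which generates its topology. -/
structure IsCompatMetric {X : Type*} [TopologicalSpace X] (d : X → X → ℝ) : Prop where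
  refl : ∀ x, d x x = 0
  eq_of : ∀ x y, d x y = 0 → x = y
  symm : ∀ x y, d x y = d y x
  triangle : ∀ x y z, d x z ≤ d x y + d y z
  nhds_basis : ∀ x : X, (𝓝 x).HasBasis (fun ε : ℝ => 0 < ε) fun ε => {y | d x y < ε}

/-- The metric `d̄(y,z) = sup_{s ∈ G} dist (s y) (s z)`. -/
def supDist (G : Type*) [AddCommGroup G] {X : Type*} [PseudoMetricSpace X] [AddAction G X]
    (y z : X) : ℝ :=
  ⨆ s : G, dist (s +ᵥ y) (s +ᵥ z)

/-- The function `f_x : t ↦ f (t +ᵥ x)` as a bounded continuous function on `G`. -/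
def fnAlong {G : Type*} [AddCommGroup G] [TopologicalSpace G] {X : Type*}
    [TopologicalSpace X] [CompactSpace X] [AddAction G X] [ContinuousVAdd G X]
    (f : C(X, ℂ)) (x : X) : BoundedContinuousFunction G ℂ :=
  BoundedContinuousFunction.ofNormedAddCommGroup (fun t => f (t +ᵥ x))
    (f.continuous.comp (continuous_vadd.comp (continuous_id.prodMk continuous_const)))
    ‖f‖ (fun t => f.norm_coe_le_norm _)

/-- The translate `F(· - t)` of a bounded continuous function on `G`. -/
def translateB {G : Type*} [AddCommGroup G] [TopologicalSpace G] [IsTopologicalAddGroup G]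
    (t : G) (F : BoundedContinuousFunction G ℂ) : BoundedContinuousFunction G ℂ :=
  F.compContinuous ⟨fun s => s - t, continuous_sub_right t⟩

/-- A bounded continuous function on `G` is weakly almost periodic if it is uniformly
continuous and its set of translates is relatively compact in the weak topology. -/
def WeaklyAPFun {G : Type*} [AddCommGroup G] [UniformSpace G] [IsUniformAddGroup G]
    (F : BoundedContinuousFunction G ℂ) : Prop :=
  UniformContinuous ⇑F ∧
    IsCompact (closure
      ((toWeakSpace ℂ (BoundedContinuousFunction G ℂ)) '' Set.range fun t : G => translateB t F))

/-- A point `x` is weakly almost periodic if `f_x` is weakly almost periodic for every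
continuous `f : X → ℂ`. -/
def WeaklyAPPoint (G : Type*) [AddCommGroup G] [UniformSpace G] [IsUniformAddGroup G]
    {X : Type*} [TopologicalSpace X] [CompactSpace X] [AddAction G X] [ContinuousVAdd G X]
    (x : X) : Prop :=
  ∀ f : C(X, ℂ), WeaklyAPFun (G := G) (fnAlong f x)

/-- A point `x` is Bohr almost periodic if `f_x` is Bohr almost periodic for every
continuous `f : X → ℂ`. -/
def BohrAPPoint (G : Type*) [AddCommGroup G] [TopologicalSpace G] {X : Type*}
    [TopologicalSpace X] [AddAction G X] (x : X) : Prop :=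
  ∀ f : C(X, ℂ), BohrAPFun fun t : G => f (t +ᵥ x)

/-- The function `f_t : x ↦ f (t +ᵥ x)` as a continuous function on `X`. -/
def translateCM {G : Type*} [AddCommGroup G] {X : Type*} [TopologicalSpace X] [AddAction G X]
    [ContinuousConstVAdd G X] (t : G) (f : C(X, ℂ)) : C(X, ℂ) :=
  f.comp ⟨fun x => t +ᵥ x, continuous_const_vadd t⟩

/-- `(X,G)` is a weakly almost periodic dynamical system: for every `f ∈ C(X)` the family
`{f_t : t ∈ G}` is relatively compact in the weak topology of `C(X)`. -/
def WeaklyAPSystem (G : Type*) (X : Type*) [AddCommGroup G] [TopologicalSpace X]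
    [CompactSpace X] [T2Space X] [AddAction G X] [ContinuousConstVAdd G X] : Prop :=
  ∀ f : C(X, ℂ),
    IsCompact (closure ((toWeakSpace ℂ C(X, ℂ)) '' Set.range fun t : G => translateCM t f))

end APPaper

/-! The map `f ↦ f_x`, `C(X) → C_b(G)`, is bounded linear and sends the translate `f_t` of `f`
to the translate of `f_x` by `-t`; being weakly continuous, it preserves relative weak
compactness of the set of translates. If the orbit of `p` is dense, `f ↦ f_p` is an isometry.
By Hahn–Banach every functional on `C(X)` then factors through it, so the weak topology of
`C(X)` is induced from that of `C_b(G)`, and by Mazur its image is weakly closed: relative weak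
compactness pulls back from `f_p` to `f`. -/

section WeakTopology

variable {𝕜 E F : Type*} [RCLike 𝕜] [NormedAddCommGroup E] [NormedSpace 𝕜 E]
  [NormedAddCommGroup F] [NormedSpace 𝕜 F]

theorem LinearIsometry.exists_dual_comp_eq (L : E →ₗᵢ[𝕜] F) (φ : StrongDual 𝕜 E) :
    ∃ ψ : StrongDual 𝕜 F, ψ.comp L.toContinuousLinearMap = φ := by
  obtain ⟨ψ, hψ, -⟩ := exists_extension_norm_eq (LinearMap.range L.toLinearMap)
    (φ.comp L.equivRange.symm.toContinuousLinearEquiv.toContinuousLinearMap)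
  refine ⟨ψ, ContinuousLinearMap.ext fun x => ?_⟩
  simpa using hψ (L.equivRange x)

theorem LinearIsometry.isInducing_weakSpaceMap (L : E →ₗᵢ[𝕜] F) :
    IsInducing (WeakSpace.map L.toContinuousLinearMap) := by
  choose ψ hψ using L.exists_dual_comp_eq
  have hcomp : (fun (y : WeakSpace 𝕜 F) φ => (topDualPairing 𝕜 F).flip y (ψ φ)) ∘
      WeakSpace.map L.toContinuousLinearMap = fun x φ => (topDualPairing 𝕜 E).flip x φ := by
    funext x φ
    exact congr($(hψ φ) x)
  refine .of_comp (WeakSpace.map _).continuous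
    (continuous_pi fun φ => WeakBilin.eval_continuous _ (ψ φ)) ?_
  rw [hcomp]
  exact ⟨rfl⟩

theorem LinearIsometry.isClosed_range_weakSpaceMap [CompleteSpace E] [NormedSpace ℝ F]
    [IsScalarTower ℝ 𝕜 F] (L : E →ₗᵢ[𝕜] F) :
    IsClosed (range (WeakSpace.map L.toContinuousLinearMap)) := by
  have hconv : Convex ℝ (range L) := ((LinearMap.range L.toLinearMap).restrictScalars ℝ).convex
  have hrange : range (WeakSpace.map L.toContinuousLinearMap) = toWeakSpace 𝕜 F '' range L := by
    rw [← range_comp]; rfl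
  rw [hrange, ← closure_eq_iff_isClosed, ← hconv.toWeakSpace_closure 𝕜,
    L.isometry.isClosedEmbedding.isClosed_range.closure_eq]

theorem LinearIsometry.isClosedEmbedding_weakSpaceMap [CompleteSpace E] [NormedSpace ℝ F]
    [IsScalarTower ℝ 𝕜 F] (L : E →ₗᵢ[𝕜] F) :
    IsClosedEmbedding (WeakSpace.map L.toContinuousLinearMap) :=
  ⟨⟨L.isInducing_weakSpaceMap, L.injective⟩, L.isClosed_range_weakSpaceMap⟩

end WeakTopology

theorem Topology.IsClosedEmbedding.isCompact_closure_image_iff {α β : Type*}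
    [TopologicalSpace α] [TopologicalSpace β] {e : α → β} (he : IsClosedEmbedding e)
    (s : Set α) : IsCompact (closure (e '' s)) ↔ IsCompact (closure s) := by
  rw [he.closure_image_eq, ← he.isCompact_iff]

theorem Continuous.isCompact_closure_image {α β : Type*} [TopologicalSpace α]
    [TopologicalSpace β] [T2Space β] {f : α → β} (hf : Continuous f) {s : Set α}
    (hs : IsCompact (closure s)) : IsCompact (closure (f '' s)) :=
  (hs.image hf).closure_of_subset (image_mono subset_closure)

theorem CompactSpace.uniformContinuous_vadd_const {G X : Type*} [AddGroup G] [UniformSpace G]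
    [IsUniformAddGroup G] [UniformSpace X] [CompactSpace X] [AddAction G X] [ContinuousVAdd G X]
    (x : X) : UniformContinuous fun t : G => t +ᵥ x := by
  intro U hU
  obtain ⟨V, hV, hVU⟩ :=
    isCompact_univ.mem_uniformity_of_prod (f := fun (u : G) (y : X) => u +ᵥ y)
      continuous_vadd.continuousOn (mem_univ 0) (symm_le_uniformity hU)
  rw [nhdsWithin_univ] at hV
  rw [uniformity_eq_comap_nhds_zero G]
  refine ⟨V, hV, fun q hq => ?_⟩
  simpa [vadd_vadd] using hVU _ hq (q.1 +ᵥ x) (mem_univ _)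

namespace APPaper

open scoped BoundedContinuousFunction

section Orbit

variable {G : Type*} [AddCommGroup G] [TopologicalSpace G]
  {X : Type*} [TopologicalSpace X] [CompactSpace X] [AddAction G X] [ContinuousVAdd G X]

theorem norm_fnAlong_le (f : C(X, ℂ)) (x : X) : ‖fnAlong (G := G) f x‖ ≤ ‖f‖ :=
  BoundedContinuousFunction.norm_ofNormedAddCommGroup_le _ (norm_nonneg f) _

def fnAlongCLM (x : X) : C(X, ℂ) →L[ℂ] G →ᵇ ℂ :=
  LinearMap.mkContinuous
    { toFun := fun f => fnAlong f x
      map_add' := fun _ _ => rfl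
      map_smul' := fun _ _ => rfl }
    1 fun f => by rw [one_mul]; exact norm_fnAlong_le f x

theorem norm_fnAlong_of_dense {p : X} (hp : Dense (orbitSet G p)) (f : C(X, ℂ)) :
    ‖fnAlong (G := G) f p‖ = ‖f‖ := by
  refine le_antisymm (norm_fnAlong_le f p) <|
    (ContinuousMap.norm_le f (norm_nonneg _)).mpr fun x => hp.induction ?_
      (isClosed_le f.continuous.norm continuous_const) x
  rintro _ ⟨t, rfl⟩
  exact (fnAlong (G := G) f p).norm_coe_le_norm t

def fnAlongₗᵢ {p : X} (hp : Dense (orbitSet G p)) : C(X, ℂ) →ₗᵢ[ℂ] G →ᵇ ℂ :=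
  { (fnAlongCLM p).toLinearMap with norm_map' := norm_fnAlong_of_dense hp }

variable [IsTopologicalAddGroup G]

theorem fnAlong_translateCM (t : G) (f : C(X, ℂ)) (x : X) :
    fnAlong (translateCM t f) x = translateB (-t) (fnAlong f x) := by
  ext s
  show f (t +ᵥ s +ᵥ x) = f ((s - -t) +ᵥ x)
  rw [sub_neg_eq_add, vadd_vadd, add_comm]

theorem weakSpaceMap_fnAlongCLM_image_translates (f : C(X, ℂ)) (x : X) :
    WeakSpace.map (fnAlongCLM x) ''
        (toWeakSpace ℂ C(X, ℂ) '' range fun t : G => translateCM t f) =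
      toWeakSpace ℂ (G →ᵇ ℂ) '' range fun t : G => translateB t (fnAlong f x) := by
  rw [image_image, ← range_comp, ← range_comp, ← neg_surjective.range_comp]
  congr 1
  funext t
  show toWeakSpace ℂ _ (fnAlong (translateCM (-t) f) x) = _
  rw [fnAlong_translateCM, neg_neg]
  rfl

end Orbit

theorem WeaklyAPSystem.weaklyAPPoint {G : Type*} [AddCommGroup G] [UniformSpace G]
    [IsUniformAddGroup G] {X : Type*} [UniformSpace X] [CompactSpace X] [T2Space X]
    [AddAction G X] [ContinuousVAdd G X] (hS : WeaklyAPSystem G X) (x : X) :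
    WeaklyAPPoint G x := fun f =>
  ⟨(CompactSpace.uniformContinuous_of_continuous f.continuous).comp
      (CompactSpace.uniformContinuous_vadd_const x), by
    rw [← weakSpaceMap_fnAlongCLM_image_translates (G := G)]
    exact (WeakSpace.map (fnAlongCLM x)).continuous.isCompact_closure_image (hS f)⟩

theorem WeaklyAPPoint.weaklyAPSystem {G : Type*} [AddCommGroup G] [UniformSpace G]
    [IsUniformAddGroup G] {X : Type*} [TopologicalSpace X] [CompactSpace X] [T2Space X]
    [AddAction G X] [ContinuousVAdd G X] {p : X} (hp : Dense (orbitSet G p))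
    (hP : WeaklyAPPoint G p) : WeaklyAPSystem G X := fun f => by
  rw [← (fnAlongₗᵢ (G := G) hp).isClosedEmbedding_weakSpaceMap.isCompact_closure_image_iff]
  have hcpt := (hP f).2
  rwa [← weakSpaceMap_fnAlongCLM_image_translates] at hcpt

theorem statement_11_general
    {G : Type*} [AddCommGroup G] [UniformSpace G] [IsUniformAddGroup G]
    {X : Type*} [MetricSpace X] [CompactSpace X] [AddAction G X] [ContinuousVAdd G X]
    (p : X) (hp : Dense (orbitSet G p)) :
    (WeaklyAPSystem G X ↔ ∀ x : X, WeaklyAPPoint G x) ∧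
    (WeaklyAPSystem G X ↔ WeaklyAPPoint G p) := by
  have hpoint : WeaklyAPPoint G p → WeaklyAPSystem G X := WeaklyAPPoint.weaklyAPSystem hp
  exact ⟨⟨fun hS x => hS.weaklyAPPoint x, fun h => hpoint (h p)⟩,
    ⟨fun hS => hS.weaklyAPPoint p, hpoint⟩⟩

/-- For a system with a transitive point, weak almost periodicity of the
system is equivalent to weak almost periodicity of all (resp. one transitive) point. -/
theorem statement_11
    {G : Type*} [AddCommGroup G] [UniformSpace G] [IsUniformAddGroup G] [T2Space G]
    [LocallyCompactSpace G] [SigmaCompactSpace G]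
    {X : Type*} [MetricSpace X] [CompactSpace X] [AddAction G X] [ContinuousVAdd G X]
    (p : X) (hp : Dense (orbitSet G p)) :
    (WeaklyAPSystem G X ↔ ∀ x : X, WeaklyAPPoint G x) ∧
    (WeaklyAPSystem G X ↔ WeaklyAPPoint G p) :=
  statement_11_general p hp

end APPaper
end
end

section
/- Let (X,G) be a dynamical system over a σ-compact locally compact abelian group G with metric d. A point p ∈ X is a Bohr almost periodic point if and only if the function G → [0,∞), t ↦ d̄(p,tp), where d̄(y,z) := sup_{s∈G} d(sy,sz), is a Bohr almost periodic function. -/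
open MeasureTheory Filter Topology Set Pointwise

noncomputable section

namespace APPaper

/-!
Write `φ(t) = d̄(p, t p)`. It is symmetric and subadditive with `φ 0 = 0`, so
`sup_s |φ s - φ (s - t)| = φ t`: both sides of the equivalence say that the orbit map
`t ↦ t p`, viewed as a map into `(X, d)`, is Bohr almost periodic in the sup-distance `φ`.
That this follows from the almost periodicity of all `f_p` is the usual "common almost periods"
argument: each `f_p` is uniformly continuous, so its translates form a totally bounded family,
and finitely many totally bounded families (here `f = d(·, y)` for `y` in a finite net of `X`)
are jointly totally bounded.
-/

section TranslateDist

variable {G : Type*} [AddCommGroup G] {Y Z : Type*} [PseudoMetricSpace Y] [PseudoMetricSpace Z]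

/-- Takes the junk value `0` when the range of `u` is unbounded. -/
def translateDist (u : G → Y) (t : G) : ℝ :=
  ⨆ s, dist (u s) (u (s - t))

def BohrAPMap [TopologicalSpace G] (u : G → Y) : Prop :=
  ∀ ε : ℝ, 0 < ε → RelDense {t : G | translateDist u t < ε}

/-- `translateDist u (g - τ)` is the uniform distance between `u (· - g)` and `u (· - τ)`. -/
def TotallyBoundedTranslates (u : G → Y) : Prop :=
  ∀ η : ℝ, 0 < η → ∃ T : Finset G, ∀ g, ∃ τ ∈ T, translateDist u (g - τ) ≤ η

variable {u : G → Y}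

lemma dist_le_translateDist (hu : Bornology.IsBounded (range u)) (s t : G) :
    dist (u s) (u (s - t)) ≤ translateDist u t := by
  obtain ⟨C, hC⟩ := Metric.isBounded_iff.1 hu
  exact le_ciSup (f := fun s => dist (u s) (u (s - t)))
    ⟨C, forall_mem_range.2 fun s => hC (mem_range_self _) (mem_range_self _)⟩ s

lemma translateDist_le {t : G} {η : ℝ} (h : ∀ s, dist (u s) (u (s - t)) ≤ η) :
    translateDist u t ≤ η :=
  ciSup_le h

lemma translateDist_nonneg (t : G) : 0 ≤ translateDist u t :=
  Real.iSup_nonneg fun _ => dist_nonneg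

@[simp]
lemma translateDist_zero : translateDist u 0 = 0 := by
  simp [translateDist]

lemma translateDist_neg (t : G) : translateDist u (-t) = translateDist u t := by
  rw [translateDist, ← (Equiv.subRight t).iSup_comp]
  simp [translateDist, dist_comm]

lemma translateDist_add_le (hu : Bornology.IsBounded (range u)) (a b : G) :
    translateDist u (a + b) ≤ translateDist u a + translateDist u b :=
  translateDist_le fun s => calc
    dist (u s) (u (s - (a + b))) ≤ dist (u s) (u (s - a)) + dist (u (s - a)) (u (s - a - b)) := by
      rw [sub_add_eq_sub_sub]; exact dist_triangle _ _ _
    _ ≤ translateDist u a + translateDist u b :=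
      add_le_add (dist_le_translateDist hu s a) (dist_le_translateDist hu (s - a) b)

lemma dist_translateDist_le (hu : Bornology.IsBounded (range u)) (s t : G) :
    dist (translateDist u s) (translateDist u (s - t)) ≤ translateDist u t := by
  have h₁ := translateDist_add_le hu (s - t) t
  have h₂ := translateDist_add_le hu s (-t)
  rw [sub_add_cancel] at h₁
  rw [translateDist_neg, ← sub_eq_add_neg] at h₂
  rw [Real.dist_eq, abs_sub_le_iff]
  constructor <;> linarith

lemma translateDist_translateDist (hu : Bornology.IsBounded (range u)) (t : G) :
    translateDist (translateDist u) t = translateDist u t := by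
  refine le_antisymm (translateDist_le fun s => dist_translateDist_le hu s t) ?_
  have hbdd : BddAbove (range fun s => dist (translateDist u s) (translateDist u (s - t))) :=
    ⟨_, forall_mem_range.2 fun s => dist_translateDist_le hu s t⟩
  calc translateDist u t = dist (translateDist u t) (translateDist u (t - t)) := by
        simp [abs_of_nonneg (translateDist_nonneg t)]
    _ ≤ translateDist (translateDist u) t := le_ciSup hbdd t

lemma translateDist_le_add_of_dist_le {F : Y → Z} {c : ℝ}
    (hF : ∀ y y', dist y y' ≤ c + dist (F y) (F y')) (hu : Bornology.IsBounded (range (F ∘ u)))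
    (t : G) : translateDist u t ≤ c + translateDist (F ∘ u) t :=
  translateDist_le fun s => (hF _ _).trans (add_le_add le_rfl (dist_le_translateDist hu s t))

section Topology

variable [TopologicalSpace G]

lemma RelDense.mono {A B : Set G} (h : RelDense A) (hAB : A ⊆ B) : RelDense B :=
  let ⟨K, hK, hA⟩ := h
  ⟨K, hK, fun g => (hA g).imp fun _ ha => ⟨hAB ha.1, ha.2⟩⟩

lemma bohrAPFun_iff_bohrAPMap {E : Type*} [NormedAddCommGroup E] (f : G → E) :
    BohrAPFun f ↔ BohrAPMap f := by
  simp only [BohrAPFun, BohrAPMap, translateDist, dist_eq_norm]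

lemma bohrAPFun_translateDist_iff (hu : Bornology.IsBounded (range u)) :
    BohrAPFun (translateDist u) ↔ BohrAPMap u := by
  rw [bohrAPFun_iff_bohrAPMap, BohrAPMap, BohrAPMap]
  simp only [translateDist_translateDist hu]

lemma BohrAPMap.comp_uniformContinuous (h : BohrAPMap u) (hu : Bornology.IsBounded (range u))
    {g : Y → Z} (hg : UniformContinuous g) : BohrAPMap (g ∘ u) := by
  intro ε hε
  obtain ⟨δ, hδ, hgδ⟩ := Metric.uniformContinuous_iff.1 hg (ε / 2) (half_pos hε)
  refine (h δ hδ).mono fun t ht => ?_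
  have hle : translateDist (g ∘ u) t ≤ ε / 2 :=
    translateDist_le fun s => (hgδ ((dist_le_translateDist hu s t).trans_lt ht)).le
  exact hle.trans_lt (half_lt_self hε)

lemma TotallyBoundedTranslates.bohrAPMap (h : TotallyBoundedTranslates u) : BohrAPMap u := by
  intro ε hε
  obtain ⟨T, hT⟩ := h (ε / 2) (half_pos hε)
  refine ⟨T, T.finite_toSet.isCompact, fun g => ?_⟩
  obtain ⟨τ, hτT, hτ⟩ := hT g
  exact ⟨g - τ, hτ.trans_lt (half_lt_self hε), by simpa using hτT⟩

end Topology

lemma TotallyBoundedTranslates.pi {ι : Type*} [Fintype ι] {u : ι → G → Y}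
    (hu : ∀ i, Bornology.IsBounded (range (u i))) (h : ∀ i, TotallyBoundedTranslates (u i)) :
    TotallyBoundedTranslates fun s i => u i s := by
  classical
  intro η hη
  choose T hT using fun i => h i (η / 2) (half_pos hη)
  choose τ hτT hτ using hT
  -- Two points with the same approximating vector `(τ i g)ᵢ` have translates `η`-close.
  let c : G → ι → G := fun g i => τ i g
  refine ⟨(Fintype.piFinset T).image (Function.invFun c), fun g => ⟨Function.invFun c (c g),
    Finset.mem_image_of_mem _ (Fintype.mem_piFinset.2 fun i => hτT i g), ?_⟩⟩
  set r := Function.invFun c (c g)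
  have hr : c r = c g := Function.invFun_eq ⟨g, rfl⟩
  refine translateDist_le fun s => (dist_pi_le_iff hη.le).2 fun i => ?_
  have hri : τ i r = τ i g := congrFun hr i
  calc dist (u i s) (u i (s - (g - r))) ≤ translateDist (u i) ((g - τ i g) + -(r - τ i r)) := by
        rw [hri, neg_sub, ← add_sub_assoc, sub_add_cancel]
        exact dist_le_translateDist (hu i) s _
    _ ≤ translateDist (u i) (g - τ i g) + translateDist (u i) (r - τ i r) :=
        (translateDist_add_le (hu i) _ _).trans_eq (by rw [translateDist_neg])
    _ ≤ η := by linarith [hτ i g, hτ i r]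

variable [TopologicalSpace G] [IsTopologicalAddGroup G]

lemma BohrAPMap.eventually_translateDist_le (h : BohrAPMap u) (hc : Continuous u)
    (hu : Bornology.IsBounded (range u)) {η : ℝ} (hη : 0 < η) :
    ∀ᶠ δ in 𝓝 (0 : G), translateDist u δ ≤ η := by
  obtain ⟨K, hK, hKA⟩ := h (η / 3) (by positivity)
  have hW : ∀ᶠ δ in 𝓝 (0 : G), ∀ κ ∈ K, dist (u κ) (u (κ - δ)) < η / 3 := by
    refine hK.eventually_forall_of_forall_eventually fun κ _ => ?_
    have hcont : Continuous fun z : G × G => dist (u z.2) (u (z.2 - z.1)) :=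
      (hc.comp continuous_snd).dist (hc.comp (continuous_snd.sub continuous_fst))
    exact hcont.continuousAt.eventually_lt continuousAt_const (by rw [sub_zero, dist_self]; positivity)
  filter_upwards [hW] with δ hδ
  refine translateDist_le fun s => ?_
  obtain ⟨a, ha, hsa⟩ := hKA s
  have hclose : ∀ x, dist (u x) (u (x - a)) < η / 3 := fun x =>
    (dist_le_translateDist hu x a).trans_lt ha
  have h₂ := hδ _ hsa
  have h₃ := hclose (s - δ)
  rw [sub_right_comm] at h₂
  linarith [dist_triangle4 (u s) (u (s - a)) (u (s - δ - a)) (u (s - δ)), hclose s,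
    dist_comm (u (s - δ)) (u (s - δ - a))]

lemma BohrAPMap.totallyBoundedTranslates (h : BohrAPMap u) (hc : Continuous u)
    (hu : Bornology.IsBounded (range u)) : TotallyBoundedTranslates u := by
  intro η hη
  obtain ⟨K, hK, hKA⟩ := h (η / 2) (half_pos hη)
  have hV := h.eventually_translateDist_le hc hu (half_pos hη)
  obtain ⟨T, -, hKT⟩ := hK.elim_nhds_subcover (fun τ => (· - τ) ⁻¹' {δ | translateDist u δ ≤ η / 2})
    fun τ _ => (continuous_sub_right τ).continuousAt.preimage_mem_nhds (by rwa [sub_self])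
  refine ⟨T, fun g => ?_⟩
  obtain ⟨a, ha, hga⟩ := hKA g
  obtain ⟨τ, hτT, hτ⟩ := mem_iUnion₂.1 (hKT hga)
  refine ⟨τ, hτT, ?_⟩
  calc translateDist u (g - τ) = translateDist u (a + (g - a - τ)) := by abel_nf
    _ ≤ translateDist u a + translateDist u (g - a - τ) := translateDist_add_le hu _ _
    _ ≤ η := by
      have ha' : translateDist u a < η / 2 := ha
      have hτ' : translateDist u (g - a - τ) ≤ η / 2 := hτ
      linarith

end TranslateDist

lemma exists_finset_dist_le_two_mul_add_dist {X : Type*} [PseudoMetricSpace X] [CompactSpace X]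
    {r : ℝ} (hr : 0 < r) :
    ∃ N : Finset X, ∀ x x' : X,
      dist x x' ≤ 2 * r + dist (fun y : N => (dist x y : ℂ)) (fun y : N => (dist x' y : ℂ)) := by
  obtain ⟨N, -, hNfin, hN⟩ := finite_cover_balls_of_compact (isCompact_univ (X := X)) hr
  refine ⟨hNfin.toFinset, fun x x' => ?_⟩
  obtain ⟨y, hyN, hxy⟩ := mem_iUnion₂.1 (hN (mem_univ x))
  have hy := dist_le_pi_dist (fun y : hNfin.toFinset => (dist x y : ℂ))
    (fun y : hNfin.toFinset => (dist x' y : ℂ)) ⟨y, hNfin.mem_toFinset.2 hyN⟩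
  rw [Complex.isometry_ofReal.dist_eq, Real.dist_eq] at hy
  linarith [dist_triangle_right x x' y, neg_abs_le (dist x y - dist x' y), Metric.mem_ball.1 hxy]

section Orbit

variable {G : Type*} [AddCommGroup G] {X : Type*} [PseudoMetricSpace X] [AddAction G X]

lemma supDist_vadd_eq_translateDist (p : X) (t : G) :
    supDist G p (t +ᵥ p) = translateDist (· +ᵥ p) t := by
  rw [translateDist, ← (Equiv.addRight t).iSup_comp]
  simp [supDist, vadd_vadd, dist_comm]

variable [CompactSpace X]

lemma isBounded_range_vadd (p : X) : Bornology.IsBounded (range fun t : G => t +ᵥ p) :=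
  isCompact_univ.isBounded.subset (subset_univ _)

lemma isBounded_range_comp_vadd {Z : Type*} [PseudoMetricSpace Z] {F : X → Z}
    (hF : Continuous F) (p : X) : Bornology.IsBounded (range fun t : G => F (t +ᵥ p)) :=
  (isCompact_range hF).isBounded.subset (range_comp_subset_range _ F)

variable [TopologicalSpace G]

lemma BohrAPMap.bohrAPPoint {p : X} (h : BohrAPMap (· +ᵥ p : G → X)) : BohrAPPoint G p :=
  fun f => (bohrAPFun_iff_bohrAPMap _).2 <|
    h.comp_uniformContinuous (isBounded_range_vadd p)
      (CompactSpace.uniformContinuous_of_continuous f.continuous)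

variable [IsTopologicalAddGroup G] [ContinuousVAdd G X]

lemma BohrAPPoint.bohrAPMap_vadd {p : X} (hp : BohrAPPoint G p) :
    BohrAPMap (· +ᵥ p : G → X) := by
  intro ε hε
  obtain ⟨N, hN⟩ := exists_finset_dist_le_two_mul_add_dist (X := X) (r := ε / 4) (by positivity)
  set F : X → N → ℂ := fun x y => (dist x y : ℂ)
  have hF : Continuous F := by fun_prop
  have hdist : ∀ y : N, Continuous fun x : X => (dist x y : ℂ) := fun y => by fun_prop
  have hv : TotallyBoundedTranslates (F ∘ (· +ᵥ p) : G → N → ℂ) :=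
    TotallyBoundedTranslates.pi (fun y => isBounded_range_comp_vadd (hdist y) p) fun y =>
      ((bohrAPFun_iff_bohrAPMap _).1 (hp ⟨_, hdist y⟩)).totallyBoundedTranslates
        ((hdist y).comp (continuous_id.vadd continuous_const))
        (isBounded_range_comp_vadd (hdist y) p)
  refine (hv.bohrAPMap (ε / 4) (by positivity)).mono fun t ht => ?_
  have hcomp := translateDist_le_add_of_dist_le hN (isBounded_range_comp_vadd hF p) t
  have ht' : translateDist (F ∘ (· +ᵥ p)) t < ε / 4 := ht
  exact hcomp.trans_lt (by linarith)

lemma bohrAPPoint_iff_bohrAPMap_vadd (p : X) :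
    BohrAPPoint G p ↔ BohrAPMap (· +ᵥ p : G → X) :=
  ⟨BohrAPPoint.bohrAPMap_vadd, BohrAPMap.bohrAPPoint⟩

end Orbit

theorem statement_15_general
    {G : Type*} [AddCommGroup G] [TopologicalSpace G] [IsTopologicalAddGroup G]
    {X : Type*} [MetricSpace X] [CompactSpace X] [AddAction G X] [ContinuousVAdd G X]
    (p : X) :
    BohrAPPoint G p ↔ BohrAPFun fun t : G => supDist G p (t +ᵥ p) := by
  simp only [supDist_vadd_eq_translateDist]
  rw [bohrAPFun_translateDist_iff (isBounded_range_vadd p),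
    bohrAPPoint_iff_bohrAPMap_vadd]

/-- A point `p` is Bohr almost periodic iff `t ↦ d̄(p, t p)` is a Bohr
almost periodic function. -/
theorem statement_15
    {G : Type*} [AddCommGroup G] [TopologicalSpace G] [IsTopologicalAddGroup G] [T2Space G]
    [LocallyCompactSpace G] [SigmaCompactSpace G]
    {X : Type*} [MetricSpace X] [CompactSpace X] [AddAction G X] [ContinuousVAdd G X]
    (p : X) :
    BohrAPPoint G p ↔ BohrAPFun fun t : G => supDist G p (t +ᵥ p) :=
  statement_15_general p

end APPaper
end
end

section
/- Let G be a locally compact abelian group, let D and E be relatively dense subsets of G, and let V be a relatively compact open neighborhood of the neutral element of G. Then the set ((D−D)+V) ∩ ((E−E)+V) is relatively dense in G, where D−D := {d−d' : d,d' ∈ D} and A+V := {a+v : a ∈ A, v ∈ V}. -/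
open MeasureTheory Filter Topology Set Pointwise

noncomputable section

namespace APPaper

/-! Fix selections `d(g) ∈ D`, `e(g) ∈ E` with `g - d(g)`, `g - e(g)` in compact sets. The
defects `d(g) - e(g)` then range in a compact set, which finitely many translates `-c + V`
cover, so `G` splits into finitely many classes according to `c`. Comparing `g` with a fixed
representative `b` of its class, `c + (d(g) - e(b))` lies in both `D - D + V` and `E - E + V`,
and `g` minus it stays within a compact set plus the finitely many `b - c`. -/

theorem add_sub_mem_sub_add_inter {G : Type*} [AddCommGroup G] {D E V : Set G}
    {d d' e e' c : G} (hd : d ∈ D) (hd' : d' ∈ D) (he : e ∈ E) (he' : e' ∈ E)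
    (hc : c + (d - e) ∈ V) (hc' : c + (d' - e') ∈ V) :
    c + (d - e') ∈ (D - D + V) ∩ (E - E + V) := by
  constructor
  · rw [show c + (d - e') = (d - d') + (c + (d' - e')) by abel]
    exact add_mem_add (sub_mem_sub hd hd') hc'
  · rw [show c + (d - e') = (e - e') + (c + (d - e)) by abel]
    exact add_mem_add (sub_mem_sub he he') hc

section

variable {G : Type*} [AddGroup G] [TopologicalSpace G] [IsTopologicalAddGroup G]

theorem isCompact_sub {K L : Set G} (hK : IsCompact K) (hL : IsCompact L) :
    IsCompact (K - L) := by
  rw [sub_eq_add_neg]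
  exact hK.add hL.neg

theorem exists_finset_add_mem_of_isCompact {K V : Set G} (hK : IsCompact K)
    (hV : (interior V).Nonempty) : ∃ s : Finset G, ∀ x ∈ K, ∃ c ∈ s, c + x ∈ V := by
  obtain ⟨s, hs⟩ := compact_covered_by_add_left_translates hK hV
  exact ⟨s, fun x hx => by simpa using hs hx⟩

end

theorem exists_finite_range_rep {α β : Type*} [Nonempty α] {f : α → β}
    (hf : (range f).Finite) : ∃ r : α → α, (range r).Finite ∧ ∀ a, f (r a) = f a :=
  ⟨Function.invFun f ∘ f, by rw [range_comp]; exact hf.image _,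
    fun a => Function.invFun_eq ⟨a, rfl⟩⟩

theorem statement_16_general
    {G : Type*} [AddCommGroup G] [TopologicalSpace G] [IsTopologicalAddGroup G]
    {D E V : Set G} (hD : RelDense D) (hE : RelDense E)
    (hVopen : IsOpen V) (hV0 : (0 : G) ∈ V) :
    RelDense ((D - D + V) ∩ (E - E + V)) := by
  obtain ⟨KD, hKD, hD⟩ := hD
  obtain ⟨KE, hKE, hE⟩ := hE
  choose d hdD hdK using hD
  choose e heE heK using hE
  have h_defect : ∀ g, d g - e g ∈ KE - KD := fun g => by
    simpa only [sub_sub_sub_cancel_left] using sub_mem_sub (heK g) (hdK g)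
  obtain ⟨s, hs⟩ := exists_finset_add_mem_of_isCompact (isCompact_sub hKE hKD)
    (by rw [hVopen.interior_eq]; exact ⟨0, hV0⟩)
  choose c hcs hcV using fun g => hs _ (h_defect g)
  obtain ⟨r, hr, hcr⟩ := exists_finite_range_rep
    ((s.finite_toSet).subset (range_subset_iff.2 hcs))
  refine ⟨KD - KE + (range r - s),
    (isCompact_sub hKD hKE).add (hr.sub s.finite_toSet).isCompact,
    fun g => ⟨c g + (d g - e (r g)), ?_, ?_⟩⟩
  · exact add_sub_mem_sub_add_inter (hdD g) (hdD (r g)) (heE g) (heE (r g))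
      (hcV g) (hcr g ▸ hcV (r g))
  · have h : g - (c g + (d g - e (r g))) = (g - d g) - (r g - e (r g)) + (r g - c g) := by
      abel
    exact h ▸ add_mem_add (sub_mem_sub (hdK g) (heK (r g))) (sub_mem_sub ⟨g, rfl⟩ (hcs g))

/-- Intersections of thickened difference sets of relatively dense sets
are relatively dense. -/
theorem statement_16
    {G : Type*} [AddCommGroup G] [TopologicalSpace G] [IsTopologicalAddGroup G] [T2Space G]
    [LocallyCompactSpace G]
    {D E V : Set G} (hD : RelDense D) (hE : RelDense E)
    (hVopen : IsOpen V) (hV0 : (0 : G) ∈ V) (hVcomp : IsCompact (closure V)) :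
    RelDense ((D - D + V) ∩ (E - E + V)) :=
  statement_16_general hD hE hVopen hV0

end APPaper
end
end

section
/- Let G be a σ-compact locally compact abelian group and (B_n) a Følner sequence in G. Then the set of all bounded uniformly continuous mean almost periodic functions G → ℂ is closed under complex conjugation and is a subalgebra of the algebra of bounded uniformly continuous functions on G which is closed with respect to the supremum norm. -/
open MeasureTheory Filter Topology Set Pointwise

noncomputable section

namespace APPaper

/-- The set of bounded, uniformly continuous, mean almost periodic functions on `G`. -/
def MeanAPAlgebra {G : Type*} [AddCommGroup G] [UniformSpace G] [IsUniformAddGroup G]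
    [MeasurableSpace G] (μ : Measure G) (B : ℕ → Set G) : Set (G → ℂ) :=
  {f | (∃ C : ℝ, ∀ t, ‖f t‖ ≤ C) ∧ UniformContinuous f ∧ MeanAPFun μ B f}

/-!
The upper mean `M̄` is monotone, subadditive and positively homogeneous on bounded measurable
functions, and the Følner property makes it invariant under translation. Hence
`D_f(t, u) = M̄(‖f(· - t) - f(· - u)‖)` is a translation-invariant pseudometric on `G`, and for a
bounded uniformly continuous `f`, mean almost periodicity says exactly that `G` is totally bounded
for `D_f`: an `ε`-almost period `a` and a compact `K` covered by finitely many `D_f`-small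
translates give a finite net. Total boundedness for `D_f` and `D_g` gives it for
`D_{(f, g)} ≤ D_f + D_g`, so the pair `(f, g)` is mean almost periodic, and so is every function
whose increments are dominated by those of `(f, g)`: `f + g`, `f g`, `c f` and `conj f`. Closedness
under uniform limits follows from `M̄(‖f - f(· - t)‖) ≤ M̄(‖g - g(· - t)‖) + 2 ‖f - g‖_∞`.
-/

section UpperMean

variable {α : Type*} [MeasurableSpace α] {μ : Measure α} {B : ℕ → Set α} {h h₁ h₂ : α → ℝ}
  {C C₁ C₂ : ℝ}

lemma abs_avg_le (hB : ∀ n, 0 < μ.real (B n)) (hC : ∀ s, |h s| ≤ C) (n : ℕ) :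
    |avg μ B n h| ≤ C := by
  have hfin : μ (B n) < ⊤ := (ENNReal.toReal_pos_iff.1 (hB n)).2
  rw [avg, abs_mul, abs_inv, ← measureReal_def, abs_of_pos (hB n), inv_mul_le_iff₀ (hB n),
    mul_comm]
  exact norm_setIntegral_le_of_norm_le_const hfin fun s _ => (Real.norm_eq_abs _).trans_le (hC s)

lemma isBoundedUnder_abs_avg (hB : ∀ n, 0 < μ.real (B n)) (hC : ∀ s, |h s| ≤ C) :
    IsBoundedUnder (· ≤ ·) atTop fun n => |avg μ B n h| :=
  isBoundedUnder_of ⟨C, abs_avg_le hB hC⟩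

lemma avg_nonneg (h0 : 0 ≤ h) (n : ℕ) : 0 ≤ avg μ B n h :=
  mul_nonneg (inv_nonneg.2 ENNReal.toReal_nonneg) (integral_nonneg h0)

lemma integrableOn_of_abs_le (hB : ∀ n, 0 < μ.real (B n)) (hm : AEStronglyMeasurable h μ)
    (hC : ∀ s, |h s| ≤ C) (n : ℕ) : IntegrableOn h (B n) μ :=
  Measure.integrableOn_of_bounded (ENNReal.toReal_pos_iff.1 (hB n)).2.ne hm
    (ae_of_all _ fun s => (Real.norm_eq_abs _).trans_le (hC s))

lemma upperMean_mono (hB : ∀ n, 0 < μ.real (B n)) (h₁0 : 0 ≤ h₁) (hle : h₁ ≤ h₂)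
    (hm₂ : AEStronglyMeasurable h₂ μ) (hC₂ : ∀ s, |h₂ s| ≤ C₂) :
    upperMean μ B h₁ ≤ upperMean μ B h₂ := by
  refine limsup_le_limsup (Eventually.of_forall fun n => ?_)
    (isBoundedUnder_of ⟨0, avg_nonneg h₁0⟩).isCoboundedUnder_le
    (isBoundedUnder_le_abs.1 (isBoundedUnder_abs_avg hB hC₂)).1
  exact mul_le_mul_of_nonneg_left (integral_mono_of_nonneg (ae_of_all _ h₁0)
    (integrableOn_of_abs_le hB hm₂ hC₂ n) (ae_of_all _ hle)) (inv_nonneg.2 ENNReal.toReal_nonneg)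

lemma upperMean_add_le (hB : ∀ n, 0 < μ.real (B n))
    (hm₁ : AEStronglyMeasurable h₁ μ) (hC₁ : ∀ s, |h₁ s| ≤ C₁)
    (hm₂ : AEStronglyMeasurable h₂ μ) (hC₂ : ∀ s, |h₂ s| ≤ C₂) :
    upperMean μ B (h₁ + h₂) ≤ upperMean μ B h₁ + upperMean μ B h₂ := by
  have hadd : (fun n => avg μ B n (h₁ + h₂)) = (fun n => avg μ B n h₁) + fun n => avg μ B n h₂ := by
    ext n
    simp only [avg, Pi.add_apply, ← mul_add]
    rw [integral_add (integrableOn_of_abs_le hB hm₁ hC₁ n) (integrableOn_of_abs_le hB hm₂ hC₂ n)]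
  obtain ⟨hu, hu'⟩ := isBoundedUnder_le_abs.1 (isBoundedUnder_abs_avg hB hC₁)
  obtain ⟨hv, hv'⟩ := isBoundedUnder_le_abs.1 (isBoundedUnder_abs_avg hB hC₂)
  rw [upperMean, hadd]
  exact limsup_add_le hu' hu hv'.isCoboundedUnder_le hv

lemma upperMean_const (hB : ∀ n, 0 < μ.real (B n)) (c : ℝ) : upperMean μ B (fun _ => c) = c := by
  have havg : ∀ n, avg μ B n (fun _ => c) = c := fun n => by
    rw [avg, setIntegral_const, smul_eq_mul, ← measureReal_def, inv_mul_cancel_left₀ (hB n).ne']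
  simp only [upperMean, havg, limsup_const]

lemma upperMean_const_mul (hB : ∀ n, 0 < μ.real (B n)) {a : ℝ} (ha : 0 ≤ a)
    (hC : ∀ s, |h s| ≤ C) : upperMean μ B (fun s => a * h s) = a * upperMean μ B h := by
  have havg : ∀ n, avg μ B n (fun s => a * h s) = a * avg μ B n h := fun n => by
    rw [avg, avg, integral_const_mul, mul_left_comm]
  obtain ⟨hu, hu'⟩ := isBoundedUnder_le_abs.1 (isBoundedUnder_abs_avg hB hC)
  simp only [upperMean, havg]
  exact ((monotone_mul_left_of_nonneg ha).map_limsup_of_continuousAt _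
    (continuous_const_mul a).continuousAt hu hu'.isCoboundedUnder_le).symm

lemma upperMean_le_add_of_le (hB : ∀ n, 0 < μ.real (B n)) (h0 : 0 ≤ h)
    (hle : ∀ s, h s ≤ h₁ s + h₂ s) (hm₁ : AEStronglyMeasurable h₁ μ) (hC₁ : ∀ s, |h₁ s| ≤ C₁)
    (hm₂ : AEStronglyMeasurable h₂ μ) (hC₂ : ∀ s, |h₂ s| ≤ C₂) :
    upperMean μ B h ≤ upperMean μ B h₁ + upperMean μ B h₂ :=
  (upperMean_mono hB h0 hle (hm₁.add hm₂) fun s =>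
    (abs_add_le _ _).trans (add_le_add (hC₁ s) (hC₂ s))).trans
    (upperMean_add_le hB hm₁ hC₁ hm₂ hC₂)

lemma setIntegral_sub_setIntegral_le {A A' : Set α} (hA : MeasurableSet A)
    (hA' : MeasurableSet A') (hfin : μ A ≠ ⊤) (hfin' : μ A' ≠ ⊤)
    (hm : AEStronglyMeasurable h μ) (hC : ∀ s, |h s| ≤ C) :
    ∫ s in A, h s ∂μ - ∫ s in A', h s ∂μ ≤ C * μ.real ((A' \ A) ∪ (A \ A')) := by
  have hint : ∀ {D : Set α}, μ D ≠ ⊤ → IntegrableOn h D μ := fun hD =>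
    Measure.integrableOn_of_bounded hD hm
      (ae_of_all _ fun s => (Real.norm_eq_abs _).trans_le (hC s))
  have hbound : ∀ {D : Set α}, μ D ≠ ⊤ → |∫ s in D, h s ∂μ| ≤ C * μ.real D := fun hD =>
    norm_setIntegral_le_of_norm_le_const hD.lt_top
      fun s _ => (Real.norm_eq_abs _).trans_le (hC s)
  have h₁ := abs_le.1 (hbound (measure_ne_top_of_subset (sdiff_subset (t := A')) hfin))
  have h₂ := abs_le.1 (hbound (measure_ne_top_of_subset (sdiff_subset (t := A)) hfin'))
  rw [← integral_inter_add_sdiff hA' (hint hfin), ← integral_inter_add_sdiff hA (hint hfin'),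
    inter_comm, measureReal_union disjoint_sdiff_sdiff (hA.diff hA')
      (measure_ne_top_of_subset sdiff_subset hfin') (measure_ne_top_of_subset sdiff_subset hfin)]
  linarith [h₁.2, h₂.1]

end UpperMean

lemma IsFolner.measureReal_pos {G : Type*} [AddCommGroup G] [TopologicalSpace G]
    [MeasurableSpace G] {μ : Measure G} [μ.IsOpenPosMeasure] [IsFiniteMeasureOnCompacts μ]
    {B : ℕ → Set G} (hB : IsFolner μ B) (n : ℕ) : 0 < μ.real (B n) :=
  ENNReal.toReal_pos ((hB.isOpen n).measure_ne_zero μ (hB.nonempty n))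
    (measure_mono subset_closure |>.trans_lt (hB.relCompact n).measure_lt_top).ne

section Folner

variable {G : Type*} [AddCommGroup G] [TopologicalSpace G] [IsTopologicalAddGroup G]
  [MeasurableSpace G] [BorelSpace G] {μ : Measure G} [μ.IsAddHaarMeasure] {B : ℕ → Set G}
  {h : G → ℝ} {C : ℝ}

lemma avg_comp_sub_right_le (hB : IsFolner μ B) (hm : AEStronglyMeasurable h μ)
    (hC : ∀ s, |h s| ≤ C) (r : G) (n : ℕ) :
    avg μ B n (fun s => h (s - r)) ≤
      avg μ B n h + C * (μ.real ((B n \ (-r +ᵥ B n)) ∪ ((-r +ᵥ B n) \ B n)) / μ.real (B n)) := by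
  have hpre : (fun s => s - r) ⁻¹' (-r +ᵥ B n) = B n := by
    ext s
    simp [mem_vadd_set_iff_neg_vadd_mem]
  have hshift := (measurePreserving_sub_right μ r).setIntegral_preimage_emb
    (MeasurableEquiv.subRight r).measurableEmbedding h (-r +ᵥ B n)
  rw [hpre] at hshift
  have hfin : μ (B n) ≠ ⊤ := (ENNReal.toReal_pos_iff.1 (hB.measureReal_pos n)).2.ne
  have hdiff := setIntegral_sub_setIntegral_le ((hB.isOpen n).vadd (-r)).measurableSet
    (hB.isOpen n).measurableSet (by rwa [measure_vadd]) hfin hm hC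
  have key := mul_le_mul_of_nonneg_left hdiff (inv_nonneg.2 (hB.measureReal_pos n).le)
  rw [mul_sub] at key
  simp only [avg, ← measureReal_def, hshift, div_eq_inv_mul]
  linarith

lemma upperMean_comp_sub_right_le (hB : IsFolner μ B) (hm : AEStronglyMeasurable h μ)
    (hC : ∀ s, |h s| ≤ C) (r : G) :
    upperMean μ B (fun s => h (s - r)) ≤ upperMean μ B h := by
  set e : ℕ → ℝ := fun n =>
    C * (μ.real ((B n \ (-r +ᵥ B n)) ∪ ((-r +ᵥ B n) \ B n)) / μ.real (B n))
  have he : Tendsto e atTop (𝓝 0) := by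
    simpa [e, measureReal_def] using (hB.folner (-r)).const_mul C
  obtain ⟨hu, hu'⟩ := isBoundedUnder_le_abs.1 (isBoundedUnder_abs_avg hB.measureReal_pos hC)
  calc upperMean μ B (fun s => h (s - r))
      ≤ limsup ((fun n => avg μ B n h) + e) atTop :=
        limsup_le_limsup (Eventually.of_forall (avg_comp_sub_right_le hB hm hC r))
          (isBoundedUnder_of ⟨-C, fun n => (abs_le.1 (abs_avg_le hB.measureReal_pos
            (fun s => hC (s - r)) n)).1⟩).isCoboundedUnder_le
          (isBoundedUnder_le_add hu he.isBoundedUnder_le)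
    _ ≤ upperMean μ B h + limsup e atTop :=
        limsup_add_le hu' hu he.isBoundedUnder_ge.isCoboundedUnder_le he.isBoundedUnder_le
    _ = upperMean μ B h := by rw [he.limsup_eq, add_zero]

lemma upperMean_comp_sub_right (hB : IsFolner μ B) (hm : AEStronglyMeasurable h μ)
    (hC : ∀ s, |h s| ≤ C) (r : G) :
    upperMean μ B (fun s => h (s - r)) = upperMean μ B h := by
  refine le_antisymm (upperMean_comp_sub_right_le hB hm hC r) ?_
  have hm' : AEStronglyMeasurable (fun s => h (s - r)) μ :=
    hm.comp_quasiMeasurePreserving (measurePreserving_sub_right μ r).quasiMeasurePreserving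
  simpa using upperMean_comp_sub_right_le hB hm' (fun s => hC (s - r)) (-r)

end Folner

lemma abs_norm_sub_le {α E : Type*} [NormedAddCommGroup E] {f : α → E} {C : ℝ}
    (hfC : ∀ s, ‖f s‖ ≤ C) (a b : α) : |‖f a - f b‖| ≤ C + C := by
  rw [abs_norm]
  exact (norm_sub_le _ _).trans (add_le_add (hfC a) (hfC b))

section MeanDist

variable {G : Type*} [AddCommGroup G] [MeasurableSpace G] {μ : Measure G} {B : ℕ → Set G}
  {E : Type*} [NormedAddCommGroup E]

variable (μ B) in
def meanDist (f : G → E) (t u : G) : ℝ :=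
  upperMean μ B fun s => ‖f (s - t) - f (s - u)‖

lemma meanDist_comm (f : G → E) (t u : G) : meanDist μ B f t u = meanDist μ B f u t := by
  simp only [meanDist, norm_sub_rev]

lemma meanDist_zero_left (f : G → E) (t : G) :
    meanDist μ B f 0 t = upperMean μ B fun s => ‖f s - f (s - t)‖ := by
  simp only [meanDist, sub_zero]

lemma aestronglyMeasurable_norm_sub_comp [TopologicalSpace G] [IsTopologicalAddGroup G]
    [OpensMeasurableSpace G] {f : G → E} (hf : Continuous f) (t u : G) :
    AEStronglyMeasurable (fun s => ‖f (s - t) - f (s - u)‖) μ :=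
  ((hf.comp (continuous_sub_right t)).sub (hf.comp (continuous_sub_right u))).norm
    |>.aestronglyMeasurable

lemma meanDist_le_of_forall_le [TopologicalSpace G] [μ.IsOpenPosMeasure]
    [IsFiniteMeasureOnCompacts μ] {f : G → E} (hB : IsFolner μ B) {t u : G} {c : ℝ}
    (hc : ∀ s, ‖f (s - t) - f (s - u)‖ ≤ c) : meanDist μ B f t u ≤ c := by
  have := upperMean_mono hB.measureReal_pos (fun _ => norm_nonneg _) hc
    aestronglyMeasurable_const (fun _ => le_refl |c|)
  rwa [upperMean_const hB.measureReal_pos] at this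

end MeanDist

section MeanDistFolner

variable {G : Type*} [AddCommGroup G] [TopologicalSpace G] [IsTopologicalAddGroup G]
  [MeasurableSpace G] [BorelSpace G] {μ : Measure G} [μ.IsAddHaarMeasure] {B : ℕ → Set G}
  {E : Type*} [NormedAddCommGroup E] {f : G → E} {C : ℝ}

lemma meanDist_triangle (hB : IsFolner μ B) (hf : Continuous f) (hfC : ∀ s, ‖f s‖ ≤ C)
    (t u v : G) : meanDist μ B f t v ≤ meanDist μ B f t u + meanDist μ B f u v :=
  upperMean_le_add_of_le hB.measureReal_pos (fun _ => norm_nonneg _)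
    (fun _ => norm_sub_le_norm_sub_add_norm_sub _ _ _)
    (aestronglyMeasurable_norm_sub_comp hf t u) (fun _ => abs_norm_sub_le hfC _ _)
    (aestronglyMeasurable_norm_sub_comp hf u v) (fun _ => abs_norm_sub_le hfC _ _)

lemma meanDist_add_right (hB : IsFolner μ B) (hf : Continuous f) (hfC : ∀ s, ‖f s‖ ≤ C)
    (t u r : G) : meanDist μ B f (t + r) (u + r) = meanDist μ B f t u := by
  simpa only [meanDist, sub_add_eq_sub_sub_swap] using upperMean_comp_sub_right hB
    (aestronglyMeasurable_norm_sub_comp hf t u) (fun _ => abs_norm_sub_le hfC _ _) r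

end MeanDistFolner

lemma _root_.UniformContinuous.eventually_forall_norm_comp_sub_sub_lt {G E : Type*} [AddCommGroup G]
    [UniformSpace G] [IsUniformAddGroup G] [SeminormedAddCommGroup E] {f : G → E}
    (hf : UniformContinuous f) (k : G) {δ : ℝ} (hδ : 0 < δ) :
    ∀ᶠ a in 𝓝 k, ∀ s, ‖f (s - a) - f (s - k)‖ < δ := by
  have hW := hf (Metric.dist_mem_uniformity hδ)
  rw [uniformity_eq_comap_nhds_zero G] at hW
  obtain ⟨V, hV, hVW⟩ := hW
  have hk : Tendsto (fun a => a - k) (𝓝 k) (𝓝 0) := tendsto_sub_nhds_zero_iff.2 tendsto_id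
  filter_upwards [hk hV] with a ha s
  have : (s - a, s - k) ∈ (fun p : G × G => p.2 - p.1) ⁻¹' V := by
    simpa only [mem_preimage, sub_sub_sub_cancel_left] using ha
  simpa [dist_eq_norm] using hVW this

section MeanAP

variable {G : Type*} [AddCommGroup G] [UniformSpace G] [IsUniformAddGroup G]
  [MeasurableSpace G] [BorelSpace G] {μ : Measure G} [μ.IsAddHaarMeasure] {B : ℕ → Set G}
  {E E' : Type*} [NormedAddCommGroup E] [NormedAddCommGroup E'] {f : G → E} {g : G → E'}
  {C C' : ℝ}

lemma MeanAPFun.exists_finset_meanDist_lt (hB : IsFolner μ B) (hfu : UniformContinuous f)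
    (hfC : ∀ s, ‖f s‖ ≤ C) (hf : MeanAPFun μ B f) {δ : ℝ} (hδ : 0 < δ) :
    ∃ F : Finset G, ∀ t, ∃ u ∈ F, meanDist μ B f t u < δ := by
  obtain ⟨K, hK, hKA⟩ := hf (δ / 2) (half_pos hδ)
  obtain ⟨F, -, hKF⟩ := hK.elim_nhds_subcover (fun k => {a | ∀ s, ‖f (s - a) - f (s - k)‖ < δ / 2})
    fun k _ => hfu.eventually_forall_norm_comp_sub_sub_lt k (half_pos hδ)
  refine ⟨F, fun t => ?_⟩
  obtain ⟨a, ha, hta⟩ := hKA t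
  obtain ⟨k, hkF, hk⟩ := mem_iUnion₂.1 (hKF hta)
  refine ⟨k, hkF, ?_⟩
  have h₁ : meanDist μ B f t (t - a) < δ / 2 := by
    have := meanDist_add_right hB hfu.continuous hfC a 0 (t - a)
    rw [add_sub_cancel, zero_add, meanDist_comm f a, meanDist_zero_left] at this
    exact this ▸ ha
  have h₂ : meanDist μ B f (t - a) k ≤ δ / 2 := meanDist_le_of_forall_le hB fun s => (hk s).le
  linarith [meanDist_triangle hB hfu.continuous hfC t (t - a) k]

lemma meanAPFun_of_exists_finset_meanDist_lt (hB : IsFolner μ B) (hf : Continuous f)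
    (hfC : ∀ s, ‖f s‖ ≤ C) (h : ∀ δ > 0, ∃ F : Finset G, ∀ t, ∃ u ∈ F, meanDist μ B f t u < δ) :
    MeanAPFun μ B f := by
  intro ε hε
  obtain ⟨F, hF⟩ := h ε hε
  refine ⟨F, F.finite_toSet.isCompact, fun t => ?_⟩
  obtain ⟨u, hu, htu⟩ := hF t
  refine ⟨t - u, ?_, by simpa using hu⟩
  have := meanDist_add_right hB hf hfC 0 (t - u) u
  rw [zero_add, sub_add_cancel, meanDist_zero_left, meanDist_comm] at this
  change upperMean μ B _ < ε
  rwa [← this]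

lemma meanDist_prodMk_le (hB : IsFolner μ B) (hf : Continuous f) (hfC : ∀ s, ‖f s‖ ≤ C)
    (hg : Continuous g) (hgC : ∀ s, ‖g s‖ ≤ C') (t u : G) :
    meanDist μ B (fun s => (f s, g s)) t u ≤ meanDist μ B f t u + meanDist μ B g t u :=
  upperMean_le_add_of_le hB.measureReal_pos (fun _ => norm_nonneg _)
    (fun _ => max_le_add_of_nonneg (norm_nonneg _) (norm_nonneg _))
    (aestronglyMeasurable_norm_sub_comp hf t u) (fun _ => abs_norm_sub_le hfC _ _)
    (aestronglyMeasurable_norm_sub_comp hg t u) (fun _ => abs_norm_sub_le hgC _ _)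

lemma MeanAPFun.prodMk (hB : IsFolner μ B) (hfu : UniformContinuous f) (hfC : ∀ s, ‖f s‖ ≤ C)
    (hf : MeanAPFun μ B f) (hgu : UniformContinuous g) (hgC : ∀ s, ‖g s‖ ≤ C')
    (hg : MeanAPFun μ B g) : MeanAPFun μ B fun s => (f s, g s) := by
  refine meanAPFun_of_exists_finset_meanDist_lt hB (hfu.continuous.prodMk hgu.continuous)
    (C := max C C') (fun s => max_le_max (hfC s) (hgC s)) fun δ hδ => ?_
  obtain ⟨Ff, hFf⟩ := hf.exists_finset_meanDist_lt hB hfu hfC (by positivity : 0 < δ / 4)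
  obtain ⟨Fg, hFg⟩ := hg.exists_finset_meanDist_lt hB hgu hgC (by positivity : 0 < δ / 4)
  -- a representative of each nonempty cell of the product of the two nets
  let w : G × G → G := fun p =>
    Classical.epsilon fun w => meanDist μ B f w p.1 < δ / 4 ∧ meanDist μ B g w p.2 < δ / 4
  classical
  refine ⟨(Ff ×ˢ Fg).image w, fun t => ?_⟩
  obtain ⟨u, hu, htu⟩ := hFf t
  obtain ⟨v, hv, htv⟩ := hFg t
  obtain ⟨hwu, hwv⟩ : meanDist μ B f (w (u, v)) u < δ / 4 ∧ meanDist μ B g (w (u, v)) v < δ / 4 :=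
    Classical.epsilon_spec (p := fun w => meanDist μ B f w u < δ / 4 ∧ meanDist μ B g w v < δ / 4)
      ⟨t, htu, htv⟩
  refine ⟨w (u, v), Finset.mem_image_of_mem _ (Finset.mem_product.2 ⟨hu, hv⟩), ?_⟩
  have hf' := meanDist_triangle hB hfu.continuous hfC t u (w (u, v))
  have hg' := meanDist_triangle hB hgu.continuous hgC t v (w (u, v))
  rw [meanDist_comm f u] at hf'
  rw [meanDist_comm g v] at hg'
  linarith [meanDist_prodMk_le hB hfu.continuous hfC hgu.continuous hgC t (w (u, v))]

lemma MeanAPFun.of_norm_sub_le (hB : IsFolner μ B) (hf : Continuous f) (hfC : ∀ s, ‖f s‖ ≤ C)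
    (hfap : MeanAPFun μ B f) {φ : G → E'} {K : ℝ} (hK : 0 ≤ K)
    (hφ : ∀ x y, ‖φ x - φ y‖ ≤ K * ‖f x - f y‖) : MeanAPFun μ B φ := by
  intro ε hε
  obtain ⟨L, hL, hLA⟩ := hfap (ε / (K + 1)) (by positivity)
  refine ⟨L, hL, fun t => ?_⟩
  obtain ⟨a, ha, hta⟩ := hLA t
  refine ⟨a, ?_, hta⟩
  have hle : upperMean μ B (fun s => ‖φ s - φ (s - a)‖)
      ≤ K * upperMean μ B (fun s => ‖f s - f (s - a)‖) := by
    rw [← upperMean_const_mul hB.measureReal_pos hK fun s => abs_norm_sub_le hfC _ _]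
    refine upperMean_mono hB.measureReal_pos (C₂ := K * (C + C)) (fun _ => norm_nonneg _)
      (fun s => hφ _ _)
      (continuous_const.mul (hf.sub (hf.comp (continuous_sub_right a))).norm).aestronglyMeasurable
      fun s => ?_
    rw [abs_mul, abs_of_nonneg hK]
    exact mul_le_mul_of_nonneg_left (abs_norm_sub_le hfC _ _) hK
  calc upperMean μ B (fun s => ‖φ s - φ (s - a)‖)
      ≤ K * (ε / (K + 1)) := hle.trans (mul_le_mul_of_nonneg_left ha.le hK)
    _ < ε := by
      rw [mul_div_assoc', div_lt_iff₀ (by positivity)]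
      linarith

lemma meanAPFun_of_forall_exists_norm_sub_le (hB : IsFolner μ B)
    (h : ∀ ε > 0, ∃ g : G → E, Continuous g ∧ (∃ C, ∀ s, ‖g s‖ ≤ C) ∧ MeanAPFun μ B g ∧
      ∀ s, ‖f s - g s‖ ≤ ε) : MeanAPFun μ B f := by
  intro ε hε
  obtain ⟨g, hg, ⟨C, hgC⟩, hgap, hfg⟩ := h (ε / 4) (by positivity)
  obtain ⟨L, hL, hLA⟩ := hgap (ε / 2) (by positivity)
  refine ⟨L, hL, fun t => ?_⟩
  obtain ⟨a, ha, hta⟩ := hLA t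
  refine ⟨a, ?_, hta⟩
  have hpt : ∀ s, ‖f s - f (s - a)‖ ≤ ‖g s - g (s - a)‖ + ε / 2 := fun s => by
    have h₁ := norm_sub_le_norm_sub_add_norm_sub (f s) (g s) (f (s - a))
    have h₂ := norm_sub_le_norm_sub_add_norm_sub (g s) (g (s - a)) (f (s - a))
    rw [norm_sub_rev (g (s - a))] at h₂
    linarith [hfg s, hfg (s - a)]
  have hle := upperMean_le_add_of_le hB.measureReal_pos (fun _ => norm_nonneg _) hpt
    (hg.sub (hg.comp (continuous_sub_right a))).norm.aestronglyMeasurable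
    (fun _ => abs_norm_sub_le hgC _ _) aestronglyMeasurable_const (fun _ => le_refl |ε / 2|)
  rw [upperMean_const hB.measureReal_pos] at hle
  change upperMean μ B _ < ε
  linarith [ha.out]

end MeanAP

lemma meanAPFun_const {G E : Type*} [AddCommGroup G] [TopologicalSpace G] [MeasurableSpace G]
    {μ : Measure G} [μ.IsOpenPosMeasure] [IsFiniteMeasureOnCompacts μ] {B : ℕ → Set G}
    [NormedAddCommGroup E] (hB : IsFolner μ B) (c : E) : MeanAPFun μ B fun _ : G => c :=
  fun ε hε => ⟨{0}, isCompact_singleton, fun t =>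
    ⟨t, by simpa [upperMean_const hB.measureReal_pos] using hε, by simp⟩⟩

lemma _root_.UniformContinuous.of_norm_sub_le {α E E' : Type*} [UniformSpace α]
    [SeminormedAddCommGroup E] [SeminormedAddCommGroup E'] {f : α → E} {φ : α → E'} {K : ℝ}
    (hf : UniformContinuous f) (hφ : ∀ x y, ‖φ x - φ y‖ ≤ K * ‖f x - f y‖) :
    UniformContinuous φ := by
  refine Metric.uniformity_basis_dist.tendsto_right_iff.2 fun ε hε => ?_
  filter_upwards [Metric.uniformity_basis_dist.tendsto_right_iff.1 hf (ε / (|K| + 1))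
    (by positivity)] with p hp
  simp only [dist_eq_norm] at hp ⊢
  calc ‖φ p.1 - φ p.2‖ ≤ |K| * ‖f p.1 - f p.2‖ :=
        (hφ _ _).trans (mul_le_mul_of_nonneg_right (le_abs_self K) (norm_nonneg _))
    _ ≤ |K| * (ε / (|K| + 1)) := mul_le_mul_of_nonneg_left hp.le (abs_nonneg K)
    _ < ε := by
      rw [mul_div_assoc', div_lt_iff₀ (by positivity)]
      nlinarith [abs_nonneg K]

lemma norm_mul_sub_mul_le {R : Type*} [SeminormedRing R] {a b c d : R} {Ca Cd : ℝ}
    (ha : ‖a‖ ≤ Ca) (hd : ‖d‖ ≤ Cd) : ‖a * b - c * d‖ ≤ (Ca + Cd) * (‖a - c‖ + ‖b - d‖) := by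
  have hCa : 0 ≤ Ca := (norm_nonneg a).trans ha
  have hCd : 0 ≤ Cd := (norm_nonneg d).trans hd
  calc ‖a * b - c * d‖ = ‖a * (b - d) + (a - c) * d‖ := by noncomm_ring
    _ ≤ ‖a‖ * ‖b - d‖ + ‖a - c‖ * ‖d‖ :=
        (norm_add_le _ _).trans (add_le_add (norm_mul_le _ _) (norm_mul_le _ _))
    _ ≤ Ca * ‖b - d‖ + ‖a - c‖ * Cd := by gcongr
    _ ≤ (Ca + Cd) * (‖a - c‖ + ‖b - d‖) := by
      nlinarith [norm_nonneg (a - c), norm_nonneg (b - d)]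

section MeanAPAlgebra

variable {G : Type*} [AddCommGroup G] [UniformSpace G] [IsUniformAddGroup G]
  [MeasurableSpace G] [BorelSpace G] {μ : Measure G} [μ.IsAddHaarMeasure] {B : ℕ → Set G}
  {E : Type*} [NormedAddCommGroup E] {φ : G → ℂ} {K : ℝ}

lemma mem_meanAPAlgebra_of_norm_sub_le (hB : IsFolner μ B) {f : G → E} {C : ℝ}
    (hfC : ∀ s, ‖f s‖ ≤ C) (hfu : UniformContinuous f) (hf : MeanAPFun μ B f) (hK : 0 ≤ K)
    (hφ : ∀ x y, ‖φ x - φ y‖ ≤ K * ‖f x - f y‖) : φ ∈ MeanAPAlgebra μ B := by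
  refine ⟨⟨‖φ 0‖ + K * (C + C), fun s => ?_⟩, hfu.of_norm_sub_le hφ,
    hf.of_norm_sub_le hB hfu.continuous hfC hK hφ⟩
  calc ‖φ s‖ ≤ ‖φ 0‖ + ‖φ s - φ 0‖ := norm_le_norm_add_norm_sub' _ _
    _ ≤ ‖φ 0‖ + K * (C + C) := by
      gcongr
      exact (hφ s 0).trans (mul_le_mul_of_nonneg_left
        ((norm_sub_le _ _).trans (add_le_add (hfC s) (hfC 0))) hK)

lemma mem_meanAPAlgebra_of_norm_sub_le_add (hB : IsFolner μ B) {f g : G → ℂ}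
    (hf : f ∈ MeanAPAlgebra μ B) (hg : g ∈ MeanAPAlgebra μ B) (hK : 0 ≤ K)
    (hφ : ∀ x y, ‖φ x - φ y‖ ≤ K * (‖f x - f y‖ + ‖g x - g y‖)) : φ ∈ MeanAPAlgebra μ B := by
  obtain ⟨⟨Cf, hfC⟩, hfu, hfap⟩ := hf
  obtain ⟨⟨Cg, hgC⟩, hgu, hgap⟩ := hg
  refine mem_meanAPAlgebra_of_norm_sub_le hB (f := fun s => (f s, g s))
    (fun s => max_le_max (hfC s) (hgC s)) (hfu.prodMk hgu) (hfap.prodMk hB hfu hfC hgu hgC hgap)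
    (mul_nonneg zero_le_two hK) fun x y => (hφ x y).trans ?_
  rw [mul_comm 2 K, mul_assoc]
  gcongr
  rw [Prod.mk_sub_mk, Prod.norm_def]
  linarith [le_max_left ‖f x - f y‖ ‖g x - g y‖, le_max_right ‖f x - f y‖ ‖g x - g y‖]

end MeanAPAlgebra

theorem statement_17_general
    {G : Type*} [AddCommGroup G] [UniformSpace G] [IsUniformAddGroup G]
    [MeasurableSpace G] [BorelSpace G]
    (μ : Measure G) [μ.IsAddHaarMeasure] (B : ℕ → Set G) (hB : IsFolner μ B) :
    (∀ f ∈ MeanAPAlgebra μ B, (fun t => (starRingEnd ℂ) (f t)) ∈ MeanAPAlgebra μ B) ∧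
    (∀ f ∈ MeanAPAlgebra μ B, ∀ g ∈ MeanAPAlgebra μ B, f + g ∈ MeanAPAlgebra μ B) ∧
    (∀ f ∈ MeanAPAlgebra μ B, ∀ g ∈ MeanAPAlgebra μ B, f * g ∈ MeanAPAlgebra μ B) ∧
    (∀ c : ℂ, ∀ f ∈ MeanAPAlgebra μ B, c • f ∈ MeanAPAlgebra μ B) ∧
    ((fun _ : G => (1 : ℂ)) ∈ MeanAPAlgebra μ B) ∧
    (∀ f : G → ℂ, (∃ C : ℝ, ∀ t, ‖f t‖ ≤ C) → UniformContinuous f →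
      (∀ ε : ℝ, 0 < ε → ∃ g ∈ MeanAPAlgebra μ B, ∀ t, ‖f t - g t‖ ≤ ε) →
      f ∈ MeanAPAlgebra μ B) := by
  refine ⟨fun f ⟨⟨C, hfC⟩, hfu, hf⟩ => ?_, fun f hf g hg => ?_, fun f hf g hg => ?_,
    fun c f ⟨⟨C, hfC⟩, hfu, hf⟩ => ?_, ?_, fun f hfC hfu happrox => ?_⟩
  · exact mem_meanAPAlgebra_of_norm_sub_le hB hfC hfu hf zero_le_one fun x y => by
      rw [one_mul, ← map_sub, RCLike.norm_conj]
  · exact mem_meanAPAlgebra_of_norm_sub_le_add hB hf hg zero_le_one fun x y => by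
      rw [one_mul, Pi.add_apply, Pi.add_apply, add_sub_add_comm]
      exact norm_add_le _ _
  · obtain ⟨Cf, hfC⟩ := hf.1
    obtain ⟨Cg, hgC⟩ := hg.1
    exact mem_meanAPAlgebra_of_norm_sub_le_add hB hf hg
      (add_nonneg ((norm_nonneg _).trans (hfC 0)) ((norm_nonneg _).trans (hgC 0)))
      fun x y => norm_mul_sub_mul_le (hfC x) (hgC y)
  · exact mem_meanAPAlgebra_of_norm_sub_le hB hfC hfu hf (norm_nonneg c) fun x y => by
      rw [Pi.smul_apply, Pi.smul_apply, ← smul_sub, norm_smul]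
  · exact ⟨⟨1, fun _ => norm_one.le⟩, uniformContinuous_const, meanAPFun_const hB 1⟩
  · refine ⟨hfC, hfu, meanAPFun_of_forall_exists_norm_sub_le hB fun ε hε => ?_⟩
    obtain ⟨g, ⟨hgC, hgu, hgap⟩, hfg⟩ := happrox ε hε
    exact ⟨g, hgu.continuous, hgC, hgap, hfg⟩

/-- The bounded uniformly continuous mean almost periodic functions form
a conjugation-invariant subalgebra of the bounded uniformly continuous functions which is
closed with respect to the supremum norm. -/
theorem statement_17
    {G : Type*} [AddCommGroup G] [UniformSpace G] [IsUniformAddGroup G] [T2Space G]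
    [LocallyCompactSpace G] [SigmaCompactSpace G] [MeasurableSpace G] [BorelSpace G]
    (μ : Measure G) [μ.IsAddHaarMeasure] (B : ℕ → Set G) (hB : IsFolner μ B) :
    (∀ f ∈ MeanAPAlgebra μ B, (fun t => (starRingEnd ℂ) (f t)) ∈ MeanAPAlgebra μ B) ∧
    (∀ f ∈ MeanAPAlgebra μ B, ∀ g ∈ MeanAPAlgebra μ B, f + g ∈ MeanAPAlgebra μ B) ∧
    (∀ f ∈ MeanAPAlgebra μ B, ∀ g ∈ MeanAPAlgebra μ B, f * g ∈ MeanAPAlgebra μ B) ∧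
    (∀ c : ℂ, ∀ f ∈ MeanAPAlgebra μ B, c • f ∈ MeanAPAlgebra μ B) ∧
    ((fun _ : G => (1 : ℂ)) ∈ MeanAPAlgebra μ B) ∧
    (∀ f : G → ℂ, (∃ C : ℝ, ∀ t, ‖f t‖ ≤ C) → UniformContinuous f →
      (∀ ε : ℝ, 0 < ε → ∃ g ∈ MeanAPAlgebra μ B, ∀ t, ‖f t - g t‖ ≤ ε) →
      f ∈ MeanAPAlgebra μ B) :=
  statement_17_general μ B hB

end APPaper
end
end
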